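/- arXiv:0903.3866 — 2 statements merged into one kernel-verified Lean document; each statement's English description precedes it below -/
import Mathlib

section
/- Let r, n be integers with 1 ≤ r < n-1. Then every complex zero z* of B_{r,n}(z) satisfies Re z* > -1/2. -/
/-- For integers `1 ≤ r ≤ n`, the `r`-th section of the binomial expansion of `(1+z)^n`. -/
noncomputable def binomialSection (r n : ℕ) (z : ℂ) : ℂ :=
  ∑ k ∈ Finset.range (r + 1), (n.choose k : ℂ) * z ^ k

/-!
Write `n = m + r + 1`. Counting binomial trials by the position of the `(m+1)`-st failure gives
`B_{r,n}(z) = ∑_{i ≤ r} C(m+r-i, m) (z+1)^i z^(r-i)`, so for a zero `z ≠ 0` the point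
`u = (z+1)/z` is a root of `∑_{i ≤ r} C(m+r-i, m) u^i`. Its coefficients decrease in `i`, strictly
at the first step when `m ≥ 1`, so by the strict Eneström–Kakeya theorem `|u| > 1`, that is
`|z| < |z+1|`, which says `Re z > -1/2`.
-/

open Finset

theorem binomialSection_zero_right (r n : ℕ) : binomialSection r n 0 = 1 := by
  simp [binomialSection, sum_range_succ']

theorem binomialSection_succ_succ (r N : ℕ) (z : ℂ) :
    binomialSection (r + 1) (N + 1) z
      = (z + 1) * binomialSection r N z + N.choose (r + 1) * z ^ (r + 1) := by
  have pascal : ∑ k ∈ range (r + 1), ((N + 1).choose (k + 1) : ℂ) * z ^ (k + 1)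
      = z * binomialSection r N z + ∑ k ∈ range (r + 1), (N.choose (k + 1) : ℂ) * z ^ (k + 1) := by
    rw [binomialSection, mul_sum, ← sum_add_distrib]
    refine sum_congr rfl fun k _ => ?_
    push_cast [Nat.choose_succ_succ]
    ring
  have shift : ∑ k ∈ range (r + 1), (N.choose (k + 1) : ℂ) * z ^ (k + 1) + 1
      = binomialSection r N z + N.choose (r + 1) * z ^ (r + 1) := by
    rw [binomialSection, ← sum_range_succ (fun k => (N.choose k : ℂ) * z ^ k) (r + 1),
      sum_range_succ' (fun k => (N.choose k : ℂ) * z ^ k) (r + 1)]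
    simp
  rw [binomialSection, sum_range_succ', pascal]
  simp only [Nat.choose_zero_right, Nat.cast_one, pow_zero, mul_one]
  linear_combination shift

theorem binomialSection_eq_sum (m r : ℕ) (z : ℂ) :
    binomialSection r (m + r + 1) z
      = ∑ i ∈ range (r + 1), ((m + r - i).choose m : ℂ) * (z + 1) ^ i * z ^ (r - i) := by
  induction r with
  | zero => simp [binomialSection]
  | succ r ih =>
    have hsymm : (m + r + 1).choose (r + 1) = (m + (r + 1)).choose m :=
      (Nat.choose_symm_add (a := m) (b := r + 1)).symm
    rw [show m + (r + 1) + 1 = m + r + 1 + 1 by ring, binomialSection_succ_succ, ih,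
      sum_range_succ' _ (r + 1), mul_sum, hsymm]
    congr 1
    · refine sum_congr rfl fun i _ => ?_
      rw [show m + (r + 1) - (i + 1) = m + r - i by omega, Nat.add_sub_add_right]
      ring
    · simp

theorem binomialSection_eq_pow_mul_sum (m r : ℕ) {z : ℂ} (hz : z ≠ 0) :
    binomialSection r (m + r + 1) z
      = z ^ r * ∑ i ∈ range (r + 1), ((m + r - i).choose m : ℂ) * ((z + 1) / z) ^ i := by
  rw [binomialSection_eq_sum, mul_sum]
  refine sum_congr rfl fun i hi => ?_
  rw [← pow_sub_mul_pow z (Nat.le_of_lt_succ (mem_range.1 hi)), div_pow]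
  field_simp

theorem sum_sub_mul_pow_succ {R : Type*} [CommRing R] (c : ℕ → R) (u : R) (n : ℕ) :
    ∑ i ∈ range n, (c i - c (i + 1)) * u ^ (i + 1)
      = (u - 1) * ∑ i ∈ range n, c i * u ^ i + (c 0 - c n * u ^ n) := by
  have telescope := sum_range_sub' (fun i => c i * u ^ i) n
  rw [pow_zero, mul_one] at telescope
  rw [← telescope, mul_sum, ← sum_add_distrib]
  refine sum_congr rfl fun i _ => ?_
  ring

/-- Strict Eneström–Kakeya. With `dᵢ = cᵢ - cᵢ₊₁ ≥ 0`, a root in the closed unit disc would give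
`∑ dᵢ u^(i+1) = c₀ = ∑ dᵢ`, forcing `u = 1` because `d₀ > 0`. -/
theorem one_lt_norm_of_antitone_coeff {c : ℕ → ℝ} (hc : Antitone c) {r : ℕ} (hcr : c (r + 1) = 0)
    (hc01 : c 1 < c 0) {u : ℂ} (hu : ∑ i ∈ range (r + 1), (c i : ℂ) * u ^ i = 0) :
    1 < ‖u‖ := by
  by_contra! hu1
  have hweights : ∑ i ∈ range (r + 1), (c i - c (i + 1)) = c 0 := by
    rw [sum_range_sub', hcr, sub_zero]
  have hmoments : ∑ i ∈ range (r + 1), (c i - c (i + 1)) * (u ^ (i + 1)).re = c 0 := by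
    have := congrArg Complex.re (sum_sub_mul_pow_succ (fun i => (c i : ℂ)) u (r + 1))
    simpa [hu, hcr, Complex.re_sum] using this
  have hdefect : ∑ i ∈ range (r + 1), (c i - c (i + 1)) * (1 - (u ^ (i + 1)).re) = 0 := by
    simp only [mul_sub, mul_one, sum_sub_distrib, hweights, hmoments, sub_self]
  have hre : u.re = 1 := by
    have hterm_nonneg : ∀ i ∈ range (r + 1), 0 ≤ (c i - c (i + 1)) * (1 - (u ^ (i + 1)).re) :=
      fun i _ => mul_nonneg (sub_nonneg.2 (hc i.le_succ)) <| sub_nonneg.2 <|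
        (Complex.re_le_norm _).trans (norm_pow u (i + 1) ▸ pow_le_one₀ (norm_nonneg u) hu1)
    have := (sum_eq_zero_iff_of_nonneg hterm_nonneg).1 hdefect 0 (by simp)
    have : 1 - u.re = 0 := by simpa [(sub_pos.2 hc01).ne'] using this
    linarith
  have hu_one : u = 1 := by
    have hnorm := Complex.sq_norm u
    rw [Complex.normSq_apply, hre] at hnorm
    have him : u.im = 0 := by nlinarith [norm_nonneg u]
    exact Complex.ext hre him
  have hpos : 0 < ∑ i ∈ range (r + 1), c i :=
    sum_pos' (fun i hi => hcr ▸ hc (mem_range.1 hi).le)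
      ⟨0, by simp, hc01.trans_le' (hcr ▸ hc (by omega : 1 ≤ r + 1))⟩
  subst hu_one
  simp only [one_pow, mul_one] at hu
  exact hpos.ne' (by exact_mod_cast hu)

theorem neg_half_lt_re_of_norm_lt_norm_add_one {z : ℂ} (h : ‖z‖ < ‖z + 1‖) :
    -(1 / 2) < z.re := by
  have hsq := pow_lt_pow_left₀ h (norm_nonneg z) two_ne_zero
  simp only [Complex.sq_norm, Complex.normSq_apply, Complex.add_re, Complex.add_im,
    Complex.one_re, Complex.one_im, add_zero] at hsq
  linarith

theorem zeros_in_half_plane_general (r n : ℕ) (hrn : r + 1 < n)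
    (z : ℂ) (hz : binomialSection r n z = 0) :
    z.re > -(1 / 2) := by
  obtain ⟨m, rfl⟩ : ∃ m, n = m + 1 + r + 1 := ⟨n - r - 2, by omega⟩
  have hz0 : z ≠ 0 := by
    rintro rfl
    simp [binomialSection_zero_right] at hz
  rw [binomialSection_eq_pow_mul_sum _ _ hz0, mul_eq_zero, or_iff_right (pow_ne_zero _ hz0)] at hz
  set c : ℕ → ℝ := fun i => ((m + 1 + r - i).choose (m + 1) : ℝ)
  have hc : Antitone c := fun i j hij => Nat.cast_le.2 (Nat.choose_le_choose _ (by omega))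
  have hcr : c (r + 1) = 0 := by
    simp [c, Nat.choose_eq_zero_of_lt (show m + 1 + r - (r + 1) < m + 1 by omega)]
  have hc01 : c 1 < c 0 := by
    simp only [c, Nat.sub_zero, Nat.cast_lt, show m + 1 + r = m + r + 1 by ring,
      Nat.choose_succ_succ' (m + r) m]
    exact Nat.lt_add_of_pos_left (Nat.choose_pos (by omega))
  have hnorm : 1 < ‖(z + 1) / z‖ :=
    one_lt_norm_of_antitone_coeff hc hcr hc01 (by simpa [c] using hz)
  rw [norm_div, one_lt_div (norm_pos_iff.2 hz0)] at hnorm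
  exact neg_half_lt_re_of_norm_lt_norm_add_one hnorm

theorem zeros_in_half_plane (r n : ℕ) (hr : 1 ≤ r) (hrn : r + 1 < n)
    (z : ℂ) (hz : binomialSection r n z = 0) :
    z.re > -(1 / 2) :=
  zeros_in_half_plane_general r n hrn z hz
end

section
/- Fix 0 < α < 1. There exists a unique real t > 0 satisfying t^α = K_α (1 - t) (equivalently, -t is the unique intersection point of C_α with the negative real axis, t = X_α). This t satisfies ν α < t < 1/2, where ν = 0.278… is the unique positive real root of x e^{1+x} = 1. -/
/-!
The map `t ↦ t ^ α - K_α (1 - t)` is strictly increasing on `[0, ∞)` and changes sign on `[0, 1]`,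
so it has a unique positive zero `t`, and `s < t` or `t < s` is decided by the sign of the map
at `s`. At `s = 1/2` the sign is positive because `K_α < 1`. At `s = να` we use
`ν ^ α = exp (-α (1 + ν))`; Bernoulli's inequality `(1 - α) ^ (1 - α) ≥ 1 / (1 + α)` and
`exp x ≥ 1 + x + x² / 2` reduce the sign to a polynomial inequality, which holds since `ν < 2/5`.
-/

/-- The constant `K_α = α^α (1-α)^(1-α)` for `0 < α < 1`. -/
noncomputable def Kconst (α : ℝ) : ℝ := α ^ α * (1 - α) ^ (1 - α)

open Real Set

lemma strictMonoOn_mul_exp_one_add : StrictMonoOn (fun x : ℝ => x * exp (1 + x)) (Ici 0) := by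
  intro a ha b _ hab
  exact mul_lt_mul'' hab (exp_lt_exp.2 (by linarith)) ha (exp_pos _).le

lemma existsUnique_pos_mul_exp_one_add_eq_one : ∃! ν : ℝ, 0 < ν ∧ ν * exp (1 + ν) = 1 := by
  have hcont : ContinuousOn (fun x : ℝ => x * exp (1 + x)) (Icc 0 1) := by fun_prop
  have hmem : (1 : ℝ) ∈ Icc (0 * exp (1 + 0)) (1 * exp (1 + 1)) := by
    constructor <;> norm_num
  obtain ⟨ν, hν, hνeq⟩ := intermediate_value_Icc zero_le_one hcont hmem
  have hν0 : 0 < ν := hν.1.lt_of_ne (by rintro rfl; simp at hνeq)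
  refine ⟨ν, ⟨hν0, hνeq⟩, fun μ ⟨hμ0, hμeq⟩ => ?_⟩
  exact strictMonoOn_mul_exp_one_add.injOn hμ0.le hν0.le (hμeq.trans hνeq.symm)

lemma lt_two_fifths_of_mul_exp_one_add_eq_one {ν : ℝ} (hν0 : 0 ≤ ν)
    (hν : ν * exp (1 + ν) = 1) : ν < 2 / 5 := by
  by_contra! hge
  have hexp := quadratic_le_exp_of_nonneg (by norm_num : (0 : ℝ) ≤ 7 / 5)
  have hmono := strictMonoOn_mul_exp_one_add.monotoneOn (by norm_num : (2 / 5 : ℝ) ∈ Ici 0) hν0 hge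
  norm_num [hν] at hmono hexp
  linarith

lemma inv_one_add_le_one_sub_rpow_self {α : ℝ} (hα0 : 0 ≤ α) (hα1 : α < 1) :
    (1 + α)⁻¹ ≤ (1 - α) ^ (1 - α) := by
  have h1α : 0 < 1 - α := by linarith
  have hbern : (1 + α / (1 - α)) ^ (1 - α) ≤ 1 + (1 - α) * (α / (1 - α)) :=
    rpow_one_add_le_one_add_mul_self (by linarith [div_nonneg hα0 h1α.le]) h1α.le (by linarith)
  have hbase : 1 + α / (1 - α) = (1 - α)⁻¹ := by field_simp; ring
  rw [hbase, inv_rpow h1α.le, mul_div_cancel₀ _ h1α.ne'] at hbern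
  exact inv_le_of_inv_le₀ (by positivity) hbern

lemma Kconst_pos {α : ℝ} (hα0 : 0 < α) (hα1 : α < 1) : 0 < Kconst α := by
  have := sub_pos.2 hα1
  unfold Kconst
  positivity

lemma Kconst_lt_one {α : ℝ} (hα0 : 0 < α) (hα1 : α < 1) : Kconst α < 1 := by
  have h1α : 0 < 1 - α := by linarith
  calc Kconst α < 1 * 1 :=
        mul_lt_mul'' (rpow_lt_one hα0.le hα1 hα0) (rpow_lt_one h1α.le (by linarith) h1α)
          (by positivity) (by positivity)
    _ = 1 := one_mul 1

lemma rpow_mul_lt_Kconst_mul {α ν : ℝ} (hα0 : 0 < α) (hα1 : α < 1) (hν0 : 0 < ν)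
    (hν : ν * exp (1 + ν) = 1) : (ν * α) ^ α < Kconst α * (1 - ν * α) := by
  have hν25 := lt_two_fifths_of_mul_exp_one_add_eq_one hν0.le hν
  have hνα : 0 < 1 - ν * α := by nlinarith
  have hνpow : ν ^ α = (exp (α * (1 + ν)))⁻¹ := by
    calc ν ^ α = (exp (1 + ν))⁻¹ ^ α := by rw [← eq_inv_of_mul_eq_one_left hν]
      _ = (exp (α * (1 + ν)))⁻¹ := by rw [inv_rpow (exp_pos _).le, ← exp_mul, mul_comm]
  have hexp : 1 + α < exp (α * (1 + ν)) * (1 - ν * α) := by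
    have hq := quadratic_le_exp_of_nonneg (by positivity : 0 ≤ α * (1 + ν))
    -- `(1 + a + a² / 2) (1 - να) - (1 + α) = α² (1 + ν) (1 - ν - να (1 + ν)) / 2` for `a = α (1 + ν)`
    have hpoly : 0 < α ^ 2 * (1 + ν) * (1 - ν - ν * α * (1 + ν)) := by
      have : ν * α * (1 + ν) < ν * (1 + ν) := by
        nlinarith [mul_lt_mul_of_pos_left hα1 (by positivity : 0 < ν * (1 + ν))]
      have : 0 < 1 - ν - ν * α * (1 + ν) := by nlinarith
      positivity
    nlinarith [mul_le_mul_of_nonneg_right hq hνα.le]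
  have hν_lt : ν ^ α < (1 + α)⁻¹ * (1 - ν * α) := by
    rw [hνpow, ← div_eq_inv_mul, lt_div_iff₀ (by positivity), inv_mul_lt_iff₀ (exp_pos _)]
    exact hexp
  calc (ν * α) ^ α = α ^ α * ν ^ α := by rw [mul_rpow hν0.le hα0.le, mul_comm]
    _ < α ^ α * ((1 + α)⁻¹ * (1 - ν * α)) := by gcongr
    _ ≤ α ^ α * ((1 - α) ^ (1 - α) * (1 - ν * α)) := by
        gcongr
        exact inv_one_add_le_one_sub_rpow_self hα0.le hα1
    _ = Kconst α * (1 - ν * α) := by unfold Kconst; ring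

section RpowEqMulOneSub

variable {α c : ℝ}

lemma strictMonoOn_rpow_sub_mul_one_sub (hα : 0 < α) (hc : 0 ≤ c) :
    StrictMonoOn (fun t : ℝ => t ^ α - c * (1 - t)) (Ici 0) := by
  intro a ha b _ hab
  have h1 : a ^ α < b ^ α := rpow_lt_rpow ha hab hα
  have h2 : c * (1 - b) ≤ c * (1 - a) := mul_le_mul_of_nonneg_left (by linarith) hc
  simp only
  linarith

lemma existsUnique_pos_rpow_eq_mul_one_sub (hα : 0 < α) (hc : 0 < c) :
    ∃! t : ℝ, 0 < t ∧ t ^ α = c * (1 - t) := by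
  have hcont : ContinuousOn (fun t : ℝ => t ^ α - c * (1 - t)) (Icc 0 1) :=
    ((continuous_rpow_const hα.le).sub (by fun_prop)).continuousOn
  have hmem : (0 : ℝ) ∈ Icc ((0 : ℝ) ^ α - c * (1 - 0)) ((1 : ℝ) ^ α - c * (1 - 1)) := by
    rw [zero_rpow hα.ne', one_rpow]
    constructor <;> linarith
  obtain ⟨t, ht, hteq⟩ := intermediate_value_Icc zero_le_one hcont hmem
  have hroot : t ^ α = c * (1 - t) := sub_eq_zero.1 hteq
  have ht0 : 0 < t := ht.1.lt_of_ne (by rintro rfl; simp [zero_rpow hα.ne'] at hroot; linarith)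
  refine ⟨t, ⟨ht0, hroot⟩, fun s ⟨hs0, hs⟩ => ?_⟩
  exact (strictMonoOn_rpow_sub_mul_one_sub hα hc.le).injOn hs0.le ht0.le
    (by simp only [hs, hroot, sub_self])

variable {s t : ℝ}

lemma lt_of_rpow_lt_mul_one_sub (hα : 0 < α) (hc : 0 ≤ c) (hs : 0 ≤ s) (ht : 0 ≤ t)
    (hroot : t ^ α = c * (1 - t)) (h : s ^ α < c * (1 - s)) : s < t := by
  rw [← (strictMonoOn_rpow_sub_mul_one_sub hα hc).lt_iff_lt hs ht]
  simp only [hroot, sub_self, sub_neg]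
  exact h

lemma lt_of_mul_one_sub_lt_rpow (hα : 0 < α) (hc : 0 ≤ c) (hs : 0 ≤ s) (ht : 0 ≤ t)
    (hroot : t ^ α = c * (1 - t)) (h : c * (1 - s) < s ^ α) : t < s := by
  rw [← (strictMonoOn_rpow_sub_mul_one_sub hα hc).lt_iff_lt ht hs]
  simp only [hroot, sub_self, sub_pos]
  exact h

end RpowEqMulOneSub

theorem negative_axis_intersection (α : ℝ) (hα0 : 0 < α) (hα1 : α < 1) :
    (∃! ν : ℝ, 0 < ν ∧ ν * Real.exp (1 + ν) = 1) ∧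
    (∃! t : ℝ, 0 < t ∧ t ^ α = Kconst α * (1 - t)) ∧
    (∀ ν t : ℝ, 0 < ν → ν * Real.exp (1 + ν) = 1 →
      0 < t → t ^ α = Kconst α * (1 - t) → ν * α < t ∧ t < 1 / 2) := by
  have hK := Kconst_pos hα0 hα1
  refine ⟨existsUnique_pos_mul_exp_one_add_eq_one,
    existsUnique_pos_rpow_eq_mul_one_sub hα0 hK, fun ν t hν0 hν ht0 ht => ⟨?_, ?_⟩⟩
  · exact lt_of_rpow_lt_mul_one_sub hα0 hK.le (by positivity) ht0.le ht
      (rpow_mul_lt_Kconst_mul hα0 hα1 hν0 hν)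
  · refine lt_of_mul_one_sub_lt_rpow hα0 hK.le (by norm_num) ht0.le ht ?_
    calc Kconst α * (1 - 1 / 2) < 1 / 2 := by linarith [Kconst_lt_one hα0 hα1]
      _ = (1 / 2) ^ (1 : ℝ) := (rpow_one _).symm
      _ ≤ (1 / 2) ^ α := rpow_le_rpow_of_exponent_ge (by norm_num) (by norm_num) hα1.le
end
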